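/- arXiv:2201.05306 — 2 statements merged into one kernel-verified Lean document; each statement's English description precedes it below -/
import Mathlib

section
/- Let N ≥ 2, 0 < ε < π/2 and 0 < η < ε/2. Then for every λ ∈ Σ_ε and every ξ' = (ξ_1, …, ξ_{N−1}) with each ξ_j ∈ Σ̃_η one has |λ + ξ_1² + ⋯ + ξ_{N−1}²| ≥ (sin((ε − 2η)/2))^{N−1} · (|λ| + |ξ_1|² + ⋯ + |ξ_{N−1}|²). -/
open Complex

/-- The sector `Σ_ε = {λ ∈ ℂ \ {0} : |arg λ| < π − ε}`. -/
def SSector (ε : ℝ) : Set ℂ := {z | z ≠ 0 ∧ |z.arg| < Real.pi - ε}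

/-- The double sector `Σ̃_η = {z ∈ ℂ \ {0} : |arg z| < η or |arg z| > π − η}`. -/
def DSector (η : ℝ) : Set ℂ := {z | z ≠ 0 ∧ (|z.arg| < η ∨ Real.pi - η < |z.arg|)}

/-!
Squaring maps the double sector `Σ̃_η` into the sector `|arg z| ≤ 2η`, which for `2η ≤ π/2` is the
convex cone `{z : cos (2η) |z| ≤ Re z}`. Hence `S = ∑ ξ_j²` lies in it too, with
`|S| ≥ cos (2η) ∑ |ξ_j|²`, and `λ`, `S` make an angle at most `π − (ε − 2η)`; the law of cosines
then gives `|λ + S| ≥ sin ((ε − 2η)/2) (|λ| + |S|)`.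
-/

open scoped Real

theorem cos_mul_norm_le_re_iff_abs_arg_le {θ : ℝ} (hθ₀ : 0 ≤ θ) (hθ : θ ≤ π) {z : ℂ} :
    Real.cos θ * ‖z‖ ≤ z.re ↔ |arg z| ≤ θ := by
  rcases eq_or_ne z 0 with rfl | hz
  · simpa using hθ₀
  rw [← norm_mul_cos_arg z, ← Real.cos_abs (arg z), mul_comm, mul_le_mul_iff_of_pos_left
    (norm_pos_iff.2 hz)]
  exact Real.strictAntiOn_cos.le_iff_ge ⟨hθ₀, hθ⟩ ⟨abs_nonneg _, abs_arg_le_pi z⟩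

theorem abs_arg_sq_lt_of_mem_DSector {η : ℝ} (hη : η ≤ π / 2) {ξ : ℂ} (hξ : ξ ∈ DSector η) :
    |arg (ξ ^ 2)| < 2 * η := by
  have h : arg (ξ ^ 2) = ((2 : ℕ) • (arg ξ : Real.Angle)).toReal := by
    rw [← arg_pow_coe_angle, arg_coe_angle_toReal_eq_arg]
  have hθ := arg_coe_angle_toReal_eq_arg ξ
  have hlo := neg_pi_lt_arg ξ
  have hhi := arg_le_pi ξ
  obtain ⟨-, hlt | hgt⟩ := hξ
  · rw [abs_lt] at hlt
    rw [h, Real.Angle.two_nsmul_toReal_eq_two_mul.2 (by rw [hθ]; constructor <;> linarith), hθ,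
      abs_lt]
    constructor <;> linarith
  · rcases lt_abs.1 hgt with hgt | hgt
    · rw [h, Real.Angle.two_nsmul_toReal_eq_two_mul_sub_two_pi.2 (by rw [hθ]; linarith), hθ,
        abs_lt]
      constructor <;> linarith
    · rw [h, Real.Angle.two_nsmul_toReal_eq_two_mul_add_two_pi.2 (by rw [hθ]; linarith), hθ,
        abs_lt]
      constructor <;> linarith

theorem cos_mul_sum_norm_le_re_sum {ι : Type*} {s : Finset ι} {z : ι → ℂ} {θ : ℝ} (hθ₀ : 0 ≤ θ)
    (hθ : θ ≤ π) (hz : ∀ j ∈ s, |arg (z j)| ≤ θ) :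
    Real.cos θ * ∑ j ∈ s, ‖z j‖ ≤ (∑ j ∈ s, z j).re := by
  rw [Finset.mul_sum, re_sum]
  exact Finset.sum_le_sum fun j hj => (cos_mul_norm_le_re_iff_abs_arg_le hθ₀ hθ).2 (hz j hj)

theorem abs_arg_sum_le {ι : Type*} {s : Finset ι} {z : ι → ℂ} {θ : ℝ} (hθ₀ : 0 ≤ θ)
    (hθ : θ ≤ π / 2) (hz : ∀ j ∈ s, |arg (z j)| ≤ θ) : |arg (∑ j ∈ s, z j)| ≤ θ := by
  have hπ : θ ≤ π := hθ.trans (by linarith [Real.pi_pos])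
  refine (cos_mul_norm_le_re_iff_abs_arg_le hθ₀ hπ).1 ?_
  calc Real.cos θ * ‖∑ j ∈ s, z j‖ ≤ Real.cos θ * ∑ j ∈ s, ‖z j‖ :=
        mul_le_mul_of_nonneg_left (norm_sum_le _ _) (Real.cos_nonneg_of_mem_Icc ⟨by linarith, hθ⟩)
    _ ≤ (∑ j ∈ s, z j).re := cos_mul_sum_norm_le_re_sum hθ₀ hπ hz

theorem pow_mul_sum_norm_le_norm_sum {ι : Type*} [Fintype ι] {z : ι → ℂ} {θ c : ℝ} (hθ₀ : 0 ≤ θ)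
    (hθ : θ ≤ π) (hz : ∀ j, |arg (z j)| ≤ θ) (hc₀ : 0 ≤ c) (hc : c ≤ Real.cos θ) :
    c ^ (Fintype.card ι - 1) * ∑ j, ‖z j‖ ≤ ‖∑ j, z j‖ := by
  rcases Nat.lt_or_ge (Fintype.card ι) 2 with hι | hι
  · have : Subsingleton ι := Fintype.card_le_one_iff_subsingleton.1 (by omega)
    rw [show Fintype.card ι - 1 = 0 by omega, pow_zero, one_mul]
    rcases isEmpty_or_nonempty ι with _ | ⟨⟨i⟩⟩
    · simp
    · simp only [Fintype.sum_subsingleton _ i, le_refl]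
  calc c ^ (Fintype.card ι - 1) * ∑ j, ‖z j‖ ≤ Real.cos θ * ∑ j, ‖z j‖ := by
        gcongr
        exact (pow_le_of_le_one hc₀ (hc.trans (Real.cos_le_one θ)) (by omega)).trans hc
    _ ≤ (∑ j, z j).re := cos_mul_sum_norm_le_re_sum hθ₀ hθ fun j _ => hz j
    _ ≤ ‖∑ j, z j‖ := re_le_norm _

open scoped ComplexConjugate in
theorem re_mul_conj_eq_norm_mul_norm_mul_cos (z w : ℂ) :
    (z * conj w).re = ‖z‖ * ‖w‖ * Real.cos (arg z - arg w) := by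
  rw [Real.cos_sub, mul_re, conj_re, conj_im, ← norm_mul_cos_arg z, ← norm_mul_sin_arg z,
    ← norm_mul_cos_arg w, ← norm_mul_sin_arg w]
  ring

theorem sin_half_mul_add_norm_le_norm_add {δ : ℝ} (hδ : 0 ≤ δ) {z w : ℂ}
    (h : |arg z - arg w| ≤ π - δ) : Real.sin (δ / 2) * (‖z‖ + ‖w‖) ≤ ‖z + w‖ := by
  set σ := Real.sin (δ / 2)
  have hσ₀ : 0 ≤ σ :=
    Real.sin_nonneg_of_nonneg_of_le_pi (by linarith) (by linarith [abs_nonneg (arg z - arg w)])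
  have hσ₁ : σ ^ 2 ≤ 1 := by nlinarith [Real.sin_sq_add_cos_sq (δ / 2)]
  have hcos_δ : Real.cos δ = 1 - 2 * σ ^ 2 := by
    have h := Real.cos_two_mul (δ / 2)
    rw [mul_div_cancel₀ δ two_ne_zero] at h
    linarith [Real.sin_sq_add_cos_sq (δ / 2)]
  have hcos : -Real.cos δ ≤ Real.cos (arg z - arg w) := by
    rw [← Real.cos_pi_sub, ← Real.cos_abs (arg z - arg w)]
    exact Real.cos_le_cos_of_nonneg_of_le_pi (abs_nonneg _) (by linarith) h
  have hsq : ‖z + w‖ ^ 2 = ‖z‖ ^ 2 + ‖w‖ ^ 2 + 2 * (‖z‖ * ‖w‖ * Real.cos (arg z - arg w)) := by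
    simp only [Complex.sq_norm, normSq_add, re_mul_conj_eq_norm_mul_norm_mul_cos]
  -- `‖z + w‖² ≥ (‖z‖ - ‖w‖)² + 4σ²‖z‖‖w‖ ≥ σ²(‖z‖ + ‖w‖)²`
  refine abs_le_of_sq_le_sq' ?_ (norm_nonneg _) |>.2
  nlinarith [mul_nonneg (norm_nonneg z) (norm_nonneg w),
    mul_nonneg (sub_nonneg.2 hσ₁) (sq_nonneg (‖z‖ - ‖w‖))]

theorem sector_lower_bound_sum_general
    (N : ℕ) (hN : 2 ≤ N)
    (ε η : ℝ) (hε' : ε < Real.pi / 2) (hη : 0 < η) (hη' : η < ε / 2)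
    (lam : ℂ) (hlam : lam ∈ SSector ε)
    (ξ : Fin (N - 1) → ℂ) (hξ : ∀ j, ξ j ∈ DSector η) :
    Real.sin ((ε - 2 * η) / 2) ^ (N - 1)
        * (‖lam‖ + ∑ j, ‖ξ j‖ ^ 2)
      ≤ ‖lam + ∑ j, ξ j ^ 2‖ := by
  set s := Real.sin ((ε - 2 * η) / 2)
  have hs₀ : 0 ≤ s := Real.sin_nonneg_of_nonneg_of_le_pi (by linarith) (by linarith)
  have hs_cos : s ≤ Real.cos (2 * η) := by
    rw [← Real.sin_pi_div_two_sub]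
    exact Real.sin_le_sin_of_le_of_le_pi_div_two (by linarith) (by linarith) (by linarith)
  have hsq : ∀ j, |arg (ξ j ^ 2)| ≤ 2 * η := fun j =>
    (abs_arg_sq_lt_of_mem_DSector (by linarith) (hξ j)).le
  have hsum : s ^ (N - 2) * ∑ j, ‖ξ j‖ ^ 2 ≤ ‖∑ j, ξ j ^ 2‖ := by
    simpa only [norm_pow, Fintype.card_fin, Nat.sub_sub] using
      pow_mul_sum_norm_le_norm_sum (by linarith) (by linarith) hsq hs₀ hs_cos
  have hpair : s * (‖lam‖ + ‖∑ j, ξ j ^ 2‖) ≤ ‖lam + ∑ j, ξ j ^ 2‖ := by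
    refine sin_half_mul_add_norm_le_norm_add (by linarith) ?_
    have hS := abs_arg_sum_le (by linarith) (by linarith) fun j (_ : j ∈ Finset.univ) => hsq j
    linarith [abs_sub (arg lam) (arg (∑ j, ξ j ^ 2)), hlam.2]
  have hpow : s ^ (N - 2) ≤ 1 := pow_le_one₀ hs₀ (Real.sin_le_one _)
  have hpow_succ : s ^ (N - 1) = s * s ^ (N - 2) := by
    rw [← pow_succ', show N - 2 + 1 = N - 1 by omega]
  calc s ^ (N - 1) * (‖lam‖ + ∑ j, ‖ξ j‖ ^ 2)
      = s * (s ^ (N - 2) * ‖lam‖) + s * (s ^ (N - 2) * ∑ j, ‖ξ j‖ ^ 2) := by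
        rw [hpow_succ]; ring
    _ ≤ s * ‖lam‖ + s * ‖∑ j, ξ j ^ 2‖ := by
        gcongr
        exact mul_le_of_le_one_left (norm_nonneg _) hpow
    _ ≤ ‖lam + ∑ j, ξ j ^ 2‖ := by linarith

/-- For `λ ∈ Σ_ε` and `ξ_j ∈ Σ̃_η` (`j = 1, …, N−1`) with `0 < η < ε/2`,
`|λ + ξ_1² + ⋯ + ξ_{N−1}²| ≥ (sin((ε − 2η)/2))^{N−1} (|λ| + |ξ_1|² + ⋯ + |ξ_{N−1}|²)`. -/
theorem sector_lower_bound_sum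
    (N : ℕ) (hN : 2 ≤ N)
    (ε η : ℝ) (hε : 0 < ε) (hε' : ε < Real.pi / 2) (hη : 0 < η) (hη' : η < ε / 2)
    (lam : ℂ) (hlam : lam ∈ SSector ε)
    (ξ : Fin (N - 1) → ℂ) (hξ : ∀ j, ξ j ∈ DSector η) :
    Real.sin ((ε - 2 * η) / 2) ^ (N - 1)
        * (‖lam‖ + ∑ j, ‖ξ j‖ ^ 2)
      ≤ ‖lam + ∑ j, ξ j ^ 2‖ :=
  sector_lower_bound_sum_general N hN ε η hε' hη hη' lam hlam ξ hξ
end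

section
/- Let N ≥ 2 and 0 < η < π/4. Then there exists a constant c > 0, depending only on N and η, such that for every ξ' = (ξ_1, …, ξ_{N−1}) with each ξ_j ∈ Σ̃_η one has c·Ã ≤ Re A ≤ |A| ≤ Ã, where A := (ξ_1² + ⋯ + ξ_{N−1}²)^{1/2} and Ã := (|ξ_1|² + ⋯ + |ξ_{N−1}|²)^{1/2}. -/
open Complex

noncomputable section

/-- `A = (ξ_1² + ⋯ + ξ_{N−1}²)^{1/2}` (principal square root). -/
def AA {n : ℕ} (ξ : Fin n → ℂ) : ℂ := (∑ j, ξ j ^ 2) ^ ((1 : ℂ) / 2)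

/-- `B = (λ + A²)^{1/2}` (principal square root). -/
def BB {n : ℕ} (lam : ℂ) (ξ : Fin n → ℂ) : ℂ := (lam + AA ξ ^ 2) ^ ((1 : ℂ) / 2)

/-- `Ã = (|ξ_1|² + ⋯ + |ξ_{N−1}|²)^{1/2}`. -/
def tA {n : ℕ} (ξ : Fin n → ℂ) : ℝ := Real.sqrt (∑ j, ‖ξ j‖ ^ 2)

/-- `M_λ(ξ', x_N) = (e^{−B x_N} − e^{−A x_N})/(B − A)`. -/
def Mfun {n : ℕ} (lam : ℂ) (ξ : Fin n → ℂ) (x : ℝ) : ℂ :=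
  (Complex.exp (-BB lam ξ * (x : ℂ)) - Complex.exp (-AA ξ * (x : ℂ))) / (BB lam ξ - AA ξ)

/-!
Squaring doubles the argument, so each `ξ_j²` lies in the sector `|arg w| < 2η`, where
`Re (ξ_j²) ≥ cos (2η) |ξ_j|²`. Summing, `S = ∑ ξ_j²` satisfies `cos (2η) Ã² ≤ Re S ≤ |S| ≤ Ã²`,
and the formulas `Re S^{1/2} = √((|S| + Re S)/2)` and `|S^{1/2}| = √|S|` give the bounds
with `c = √(cos 2η)`.
-/

lemma Complex.norm_cpow_one_div_two (x : ℂ) : ‖x ^ ((1 : ℂ) / 2)‖ = √‖x‖ := by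
  rw [Real.sqrt_eq_rpow, one_div, ← Nat.cast_ofNat, norm_cpow_inv_nat]
  norm_num

lemma Complex.re_cpow_one_div_two (x : ℂ) : (x ^ ((1 : ℂ) / 2)).re = √((‖x‖ + x.re) / 2) := by
  rw [one_div, cpow_inv_two_re]

lemma Complex.re_sq_eq_sq_norm_mul_cos_two_mul_arg (z : ℂ) :
    (z ^ 2).re = ‖z‖ ^ 2 * Real.cos (2 * arg z) := by
  rw [Real.cos_two_mul', mul_sub, ← mul_pow, ← mul_pow, norm_mul_cos_arg, norm_mul_sin_arg, sq,
    mul_re, sq, sq]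

lemma DSector.cos_two_mul_le_cos_two_mul_arg {η : ℝ} (hη : η ≤ Real.pi / 2) {z : ℂ}
    (hz : z ∈ DSector η) : Real.cos (2 * η) ≤ Real.cos (2 * arg z) := by
  have hπ : |arg z| ≤ Real.pi := abs_arg_le_pi z
  rw [← Real.cos_abs (2 * arg z), abs_mul, abs_two]
  rcases hz.2 with hlt | hgt
  · exact Real.cos_le_cos_of_nonneg_of_le_pi (by positivity) (by linarith) (by linarith)
  · rw [← Real.cos_two_pi_sub (2 * |arg z|), show 2 * Real.pi - 2 * |arg z| = 2 * (Real.pi - |arg z|) by ring]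
    exact Real.cos_le_cos_of_nonneg_of_le_pi (by linarith) (by linarith) (by linarith)

lemma DSector.cos_two_mul_mul_sq_norm_le_re_sq {η : ℝ} (hη : η ≤ Real.pi / 2) {z : ℂ}
    (hz : z ∈ DSector η) : Real.cos (2 * η) * ‖z‖ ^ 2 ≤ (z ^ 2).re := by
  rw [re_sq_eq_sq_norm_mul_cos_two_mul_arg, mul_comm]
  exact mul_le_mul_of_nonneg_left (cos_two_mul_le_cos_two_mul_arg hη hz) (by positivity)

lemma DSector.cos_two_mul_mul_sum_sq_norm_le_re_sum_sq {ι : Type*} [Fintype ι] {η : ℝ}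
    (hη : η ≤ Real.pi / 2) {ξ : ι → ℂ} (hξ : ∀ j, ξ j ∈ DSector η) :
    Real.cos (2 * η) * ∑ j, ‖ξ j‖ ^ 2 ≤ (∑ j, ξ j ^ 2).re := by
  rw [Finset.mul_sum, re_sum]
  exact Finset.sum_le_sum fun j _ => cos_two_mul_mul_sq_norm_le_re_sq hη (hξ j)

lemma norm_sum_sq_le_sum_sq_norm {ι : Type*} [Fintype ι] (ξ : ι → ℂ) :
    ‖∑ j, ξ j ^ 2‖ ≤ ∑ j, ‖ξ j‖ ^ 2 :=
  (norm_sum_le _ _).trans_eq (Finset.sum_congr rfl fun j _ => norm_pow (ξ j) 2)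

theorem A_bounds_general
    (N : ℕ) (η : ℝ) (hη : 0 < η) (hη' : η < Real.pi / 4) :
    ∃ c : ℝ, 0 < c ∧ ∀ ξ : Fin (N - 1) → ℂ, (∀ j, ξ j ∈ DSector η) →
      c * tA ξ ≤ (AA ξ).re ∧ (AA ξ).re ≤ ‖AA ξ‖ ∧
        ‖AA ξ‖ ≤ tA ξ := by
  have hcos : 0 < Real.cos (2 * η) :=
    Real.cos_pos_of_mem_Ioo ⟨by linarith [Real.pi_pos], by linarith⟩
  refine ⟨√(Real.cos (2 * η)), Real.sqrt_pos.mpr hcos, fun ξ hξ => ?_⟩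
  set S := ∑ j, ξ j ^ 2
  have hre : Real.cos (2 * η) * ∑ j, ‖ξ j‖ ^ 2 ≤ S.re :=
    DSector.cos_two_mul_mul_sum_sq_norm_le_re_sum_sq (by linarith) hξ
  have hnorm : ‖S‖ ≤ ∑ j, ‖ξ j‖ ^ 2 := norm_sum_sq_le_sum_sq_norm ξ
  refine ⟨?_, re_le_norm _, ?_⟩
  · rw [tA, ← Real.sqrt_mul hcos.le, AA, re_cpow_one_div_two]
    exact Real.sqrt_le_sqrt (by linarith [re_le_norm S])
  · rw [tA, AA, norm_cpow_one_div_two]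
    exact Real.sqrt_le_sqrt hnorm

/-- Lemma (a): `c Ã ≤ Re A ≤ |A| ≤ Ã` on the double sector. -/
theorem A_bounds
    (N : ℕ) (hN : 2 ≤ N) (η : ℝ) (hη : 0 < η) (hη' : η < Real.pi / 4) :
    ∃ c : ℝ, 0 < c ∧ ∀ ξ : Fin (N - 1) → ℂ, (∀ j, ξ j ∈ DSector η) →
      c * tA ξ ≤ (AA ξ).re ∧ (AA ξ).re ≤ ‖AA ξ‖ ∧
        ‖AA ξ‖ ≤ tA ξ :=
  A_bounds_general N η hη hη'

end
end
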